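/- arXiv:1912.10925 — 2 statements merged into one kernel-verified Lean document; each statement's English description precedes it below -/
import Mathlib

section
/- Let V be a finite-dimensional real inner product space and let (H_i)_{i∈I} be a finite family of closed half-spaces H_i = {ξ : ⟨ξ, γ_i⟩ ≥ c_i} with γ_i ≠ 0. Set Δ = ⋂_{i∈I} H_i and assume Δ ≠ ∅. Let I⁰ = {i ∈ I : the hyperplane {ξ : ⟨ξ, γ_i⟩ = c_i} meets Δ}. Then ⋂_{i∈I⁰} H_i = Δ. -/
open scoped RealInnerProductSpace

open Set

/-! If `ξ` lies in every half-space whose boundary meets `Δ` but not in `Δ`, walk from a point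
`x₀ ∈ Δ` towards `ξ`. The first constraint to become tight along the segment is one that `ξ`
violates, and the point where it becomes tight lies in `Δ` on its boundary hyperplane. -/

lemma exists_first_vanishing_coord {ι : Type*} [Finite ι] {a b : ι → ℝ} (ha : ∀ i, 0 ≤ a i)
    (hb : ∃ i, b i < 0) :
    ∃ t j, b j < 0 ∧ (1 - t) * a j + t * b j = 0 ∧ ∀ i, 0 ≤ (1 - t) * a i + t * b i := by
  obtain ⟨i₀, hi₀⟩ := hb
  have : Nonempty {i // b i < 0} := ⟨⟨i₀, hi₀⟩⟩
  obtain ⟨⟨j, hj⟩, hmin⟩ :=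
    Finite.exists_min fun i : {i // b i < 0} => a i / (a i - b i)
  have hdenj : 0 < a j - b j := by linarith [ha j]
  refine ⟨a j / (a j - b j), j, hj, by field_simp; ring, fun i => ?_⟩
  rcases lt_or_ge (b i) 0 with hi | hi
  · have hden : 0 < a i - b i := by linarith [ha i]
    have := (le_div_iff₀ hden).1 (hmin ⟨i, hi⟩)
    linarith
  · have ht0 : 0 ≤ a j / (a j - b j) := div_nonneg (ha j) hdenj.le
    have ht1 : a j / (a j - b j) ≤ 1 := (div_le_one hdenj).2 (by linarith)
    exact add_nonneg (mul_nonneg (by linarith) (ha i)) (mul_nonneg ht0 hi)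

theorem biInter_tight_halfSpaces_eq {E ι : Type*} [AddCommGroup E] [Module ℝ E] [Finite ι]
    (ℓ : ι → Module.Dual ℝ E) (c : ι → ℝ) (hne : (⋂ i, {x : E | c i ≤ ℓ i x}).Nonempty) :
    ⋂ i ∈ {i | ∃ y ∈ ⋂ k, {x : E | c k ≤ ℓ k x}, ℓ i y = c i}, {x : E | c i ≤ ℓ i x} =
      ⋂ i, {x : E | c i ≤ ℓ i x} := by
  refine Subset.antisymm (fun ξ hξ => ?_) fun ξ hξ => mem_iInter₂.2 fun i _ => mem_iInter.1 hξ i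
  obtain ⟨x₀, hx₀⟩ := hne
  simp only [mem_iInter, mem_ofPred_eq] at hξ hx₀ ⊢
  by_contra! hξΔ
  obtain ⟨t, j, hj, htight, hnonneg⟩ := exists_first_vanishing_coord
    (a := fun i => ℓ i x₀ - c i) (b := fun i => ℓ i ξ - c i) (fun i => sub_nonneg.2 (hx₀ i))
    (hξΔ.imp fun i => sub_neg.2)
  have hℓ : ∀ i, ℓ i ((1 - t) • x₀ + t • ξ) - c i = (1 - t) * (ℓ i x₀ - c i) + t * (ℓ i ξ - c i) :=
    fun i => by simp only [map_add, map_smul, smul_eq_mul]; ring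
  have hjtight : ∃ y, (∀ i, c i ≤ ℓ i y) ∧ ℓ j y = c j :=
    ⟨(1 - t) • x₀ + t • ξ, fun i => by linarith [hℓ i, hnonneg i], by linarith [hℓ j, htight]⟩
  linarith [hξ j hjtight]

theorem stmt2_general {V : Type*} [NormedAddCommGroup V] [InnerProductSpace ℝ V]
    {I : Type*} [Fintype I]
    (γ : I → V) (c : I → ℝ)
    (H : I → Set V) (hH : ∀ i, H i = {ξ : V | c i ≤ ⟪ξ, γ i⟫})
    (Δ : Set V) (hΔ : Δ = ⋂ i, H i) (hΔne : Δ.Nonempty) :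
    (⋂ i ∈ {i : I | ∃ ξ ∈ Δ, ⟪ξ, γ i⟫ = c i}, H i) = Δ := by
  obtain rfl : H = fun i => {ξ : V | c i ≤ ⟪ξ, γ i⟫} := funext hH
  subst hΔ
  exact biInter_tight_halfSpaces_eq (fun i => (innerₗ V).flip (γ i)) c hΔne

/-- Half-spaces whose boundary hyperplane does not meet the intersection `Δ` of a finite
family of closed half-spaces are redundant. -/
theorem stmt2 {V : Type*} [NormedAddCommGroup V] [InnerProductSpace ℝ V]
    [FiniteDimensional ℝ V] {I : Type*} [Fintype I]
    (γ : I → V) (c : I → ℝ) (hγ : ∀ i, γ i ≠ 0)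
    (H : I → Set V) (hH : ∀ i, H i = {ξ : V | c i ≤ ⟪ξ, γ i⟫})
    (Δ : Set V) (hΔ : Δ = ⋂ i, H i) (hΔne : Δ.Nonempty) :
    (⋂ i ∈ {i : I | ∃ ξ ∈ Δ, ⟪ξ, γ i⟫ = c i}, H i) = Δ :=
  stmt2_general γ c H hH Δ hΔ hΔne
end

section
/- Let V be a finite-dimensional real inner product space, Δ₀ and Δ ⊆ V with Δ closed, ξ₀ ∈ Δ₀, ξ₁ ∈ Δ ⊆ Δ₀, and suppose that Δ₀ and Δ are intersections of closed half-spaces H_i = {ξ : ⟨ξ, γ_i⟩ ≥ c_i}, i ∈ I, where Δ = ⋂_{i∈I} H_i and Δ₀ = ⋂_{i∈I⁰} H_i with I⁰ = {i : ∂H_i ∩ Δ ≠ ∅}. Then the point ξ_t = tξ₁ + (1−t)ξ₀ lies in Δ for all t ∈ [0,1]; in particular ξ₀ ∈ Δ. -/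
open scoped RealInnerProductSpace

/-!
If `ξ₀` violated some constraint, walk from `ξ₁ ∈ Δ` towards `ξ₀`: the point where the segment
first leaves `Δ` lies on the boundary hyperplane of a constraint violated by `ξ₀`. That constraint
then belongs to `I⁰`, contradicting `ξ₀ ∈ Δ₀`. The segment statement follows by convexity of `Δ`.
-/

section Polyhedron

variable {I : Type*} [Finite I]

theorem exists_tight_of_exists_lt {a b c : I → ℝ} (ha : ∀ i, c i ≤ a i) (hb : ∃ j, b j < c j) :
    ∃ t : ℝ, ∃ i₀, b i₀ < c i₀ ∧ (∀ i, c i ≤ (1 - t) * a i + t * b i) ∧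
      (1 - t) * a i₀ + t * b i₀ = c i₀ := by
  -- `t` is the smallest parameter at which one of the violated constraints becomes tight.
  obtain ⟨i₀, hi₀ : b i₀ < c i₀, hmin⟩ := Set.exists_min_image {i | b i < c i}
    (fun i => (a i - c i) / (a i - b i)) (Set.toFinite _) hb
  have hpos : ∀ i, b i < c i → 0 < a i - b i := fun i hi => by linarith [ha i]
  set t := (a i₀ - c i₀) / (a i₀ - b i₀)
  have ht0 : 0 ≤ t := div_nonneg (by linarith [ha i₀]) (hpos i₀ hi₀).le
  have ht1 : t ≤ 1 := div_le_one_of_le₀ (by linarith) (hpos i₀ hi₀).le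
  refine ⟨t, i₀, hi₀, fun i => ?_, ?_⟩
  · rcases lt_or_ge (b i) (c i) with hi | hi
    · have := (le_div_iff₀ (hpos i hi)).1 (hmin i hi)
      linarith
    · nlinarith [ha i]
  · have := div_mul_cancel₀ (a i₀ - c i₀) (hpos i₀ hi₀).ne'
    linarith

variable {V : Type*} [AddCommGroup V] [Module ℝ V]

theorem mem_iInter_of_mem_iInter_tight (φ : I → V →ₗ[ℝ] ℝ) (c : I → ℝ) {ξ₀ ξ₁ : V}
    (hξ₁ : ξ₁ ∈ ⋂ i, {ξ | c i ≤ φ i ξ})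
    (hξ₀ : ξ₀ ∈ ⋂ i ∈ {i | ∃ ξ ∈ ⋂ j, {ξ | c j ≤ φ j ξ}, φ i ξ = c i}, {ξ | c i ≤ φ i ξ}) :
    ξ₀ ∈ ⋂ i, {ξ | c i ≤ φ i ξ} := by
  simp only [Set.mem_iInter, Set.mem_ofPred_eq] at hξ₀ hξ₁ ⊢
  by_contra! hout
  obtain ⟨t, i₀, hlt, hle, heq⟩ := exists_tight_of_exists_lt hξ₁ hout
  have hφ : ∀ i, φ i ((1 - t) • ξ₁ + t • ξ₀) = (1 - t) * φ i ξ₁ + t * φ i ξ₀ := by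
    simp
  exact (hξ₀ i₀ ⟨_, fun i => (hφ i).symm ▸ hle i, (hφ i₀).trans heq⟩).not_gt hlt

end Polyhedron

theorem stmt3_general {V : Type*} [NormedAddCommGroup V] [InnerProductSpace ℝ V]
    {I : Type*} [Fintype I]
    (γ : I → V) (c : I → ℝ)
    (H : I → Set V) (hH : ∀ i, H i = {ξ : V | c i ≤ ⟪ξ, γ i⟫})
    (Δ Δ₀ : Set V) (hΔ : Δ = ⋂ i, H i)
    (hΔ₀ : Δ₀ = ⋂ i ∈ {i : I | ∃ ξ ∈ Δ, ⟪ξ, γ i⟫ = c i}, H i)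
    (ξ₀ ξ₁ : V) (hξ₀ : ξ₀ ∈ Δ₀) (hξ₁ : ξ₁ ∈ Δ) :
    (∀ t ∈ Set.Icc (0:ℝ) 1, t • ξ₁ + (1 - t) • ξ₀ ∈ Δ) ∧ ξ₀ ∈ Δ := by
  obtain rfl : H = fun i => {ξ | c i ≤ (innerₗ V).flip (γ i) ξ} := funext hH
  subst hΔ hΔ₀
  have hξ₀Δ := mem_iInter_of_mem_iInter_tight (fun i => (innerₗ V).flip (γ i)) c hξ₁ hξ₀
  have hconvex : Convex ℝ (⋂ i, {ξ | c i ≤ (innerₗ V).flip (γ i) ξ}) :=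
    convex_iInter fun i => convex_halfSpace_ge ((innerₗ V).flip (γ i)).isLinear (c i)
  exact ⟨fun t ht => hconvex hξ₁ hξ₀Δ ht.1 (by linarith [ht.2]) (by ring), hξ₀Δ⟩

/-- Let `Δ = ⋂ i, H i` be a nonempty intersection of finitely many closed half-spaces and
`Δ₀` the intersection of those `H i` whose boundary hyperplane meets `Δ`.  If `ξ₀ ∈ Δ₀` and
`ξ₁ ∈ Δ`, then the whole segment `ξ_t = t•ξ₁ + (1-t)•ξ₀` lies in `Δ`; in particular
`ξ₀ ∈ Δ`. -/
theorem stmt3 {V : Type*} [NormedAddCommGroup V] [InnerProductSpace ℝ V]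
    [FiniteDimensional ℝ V] {I : Type*} [Fintype I]
    (γ : I → V) (c : I → ℝ) (hγ : ∀ i, γ i ≠ 0)
    (H : I → Set V) (hH : ∀ i, H i = {ξ : V | c i ≤ ⟪ξ, γ i⟫})
    (Δ Δ₀ : Set V) (hΔ : Δ = ⋂ i, H i)
    (hΔ₀ : Δ₀ = ⋂ i ∈ {i : I | ∃ ξ ∈ Δ, ⟪ξ, γ i⟫ = c i}, H i)
    (hΔne : Δ.Nonempty)
    (ξ₀ ξ₁ : V) (hξ₀ : ξ₀ ∈ Δ₀) (hξ₁ : ξ₁ ∈ Δ) :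
    (∀ t ∈ Set.Icc (0:ℝ) 1, t • ξ₁ + (1 - t) • ξ₀ ∈ Δ) ∧ ξ₀ ∈ Δ :=
  stmt3_general γ c H hH Δ Δ₀ hΔ hΔ₀ ξ₀ ξ₁ hξ₀ hξ₁
end
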